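/- Let A, B be real matrices with (A,B) stabilizable, let δ > 0 and let P be a symmetric positive definite matrix satisfying the Riccati inequality PA + AᵀP − 2δ P B Bᵀ P + I < 0. Then for any complex number λ with Re(λ) ≥ δ, the matrix A − λ B BᵀP is Hurwitz (all eigenvalues with negative real parts), with Lyapunov certificate P(A − λBBᵀP) + (A − λBBᵀP)*P ≤ −I < 0. -/

import Mathlib

/-!
Since `P` and `B Bᵀ` are symmetric, for `M = A − λ B Bᵀ P` one has
`P M + M* P = P A + Aᵀ P − 2 Re λ · P B Bᵀ P`, and `P B Bᵀ P ≥ 0`; so `Re λ ≥ δ` and the Riccati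
inequality give `P M + M* P ≤ −I`. If `M v = μ v` with `v ≠ 0`, then
`v* (P M + M* P) v = 2 Re μ · v* P v < 0` with `v* P v > 0`, hence `Re μ < 0`.
-/

open Matrix
open scoped ComplexOrder

namespace Matrix

variable {n : Type*} [Fintype n]

theorem map_ofReal_mul {m p : Type*} (L : Matrix m n ℝ) (N : Matrix n p ℝ) :
    (L * N).map Complex.ofReal = L.map Complex.ofReal * N.map Complex.ofReal := by
  ext; simp only [map_apply, mul_apply, Complex.ofReal_sum, Complex.ofReal_mul]

omit [Fintype n] in
theorem map_ofReal_transpose {m : Type*} (L : Matrix m n ℝ) :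
    Lᵀ.map Complex.ofReal = (L.map Complex.ofReal)ᴴ := by
  ext; simp

open scoped MatrixOrder in
theorem PosDef.map_ofReal {M : Matrix n n ℝ} (hM : M.PosDef) :
    (M.map Complex.ofReal).PosDef := by
  classical
  -- `M = Lᵀ L` with `L = √M` invertible.
  set L := CFC.sqrt M
  have hLL : Lᵀ * L = M := by
    rw [show Lᵀ = L by simpa using (CFC.sqrt_nonneg M).posSemidef.isHermitian.eq]
    exact CFC.sqrt_mul_sqrt_self M hM.posSemidef.nonneg
  have hunit : IsUnit (L.map Complex.ofReal) :=
    (isUnit_of_mul_isUnit_right (hLL ▸ hM.isUnit)).map Complex.ofRealHom.mapMatrix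
  rw [← hLL, map_ofReal_mul, map_ofReal_transpose]
  exact .conjTranspose_mul_self _ (mulVec_injective_iff_isUnit.mpr hunit)

theorem mul_sub_smul_add_conjTranspose_mul {R : Type*} [CommRing R] [StarRing R]
    {A K P : Matrix n n R} (hK : K.IsHermitian) (hP : P.IsHermitian) (c : R) :
    P * (A - c • (K * P)) + (A - c • (K * P))ᴴ * P
      = P * A + Aᴴ * P - (c + star c) • (P * K * P) := by
  rw [conjTranspose_sub, conjTranspose_smul, conjTranspose_mul, hK.eq, hP.eq, Matrix.mul_sub,
    Matrix.sub_mul, mul_smul_comm, smul_mul_assoc, add_smul, Matrix.mul_assoc]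
  abel

variable {𝕜 : Type*} [RCLike 𝕜]

theorem lyapunov_certificate_of_riccati {m : Type*} [Fintype m] [DecidableEq n]
    {A P : Matrix n n 𝕜} {B : Matrix n m 𝕜} (hP : P.IsHermitian) {δ : ℝ}
    (hRic : (-(P * A + Aᴴ * P - (2 * δ) • (P * B * Bᴴ * P) + 1)).PosSemidef)
    {c : 𝕜} (hc : δ ≤ RCLike.re c) :
    (-(P * (A - c • (B * Bᴴ * P)) + (A - c • (B * Bᴴ * P))ᴴ * P + 1)).PosSemidef := by
  set S := P * (B * Bᴴ) * P
  have hS : S.PosSemidef := by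
    simpa only [hP.eq] using (posSemidef_self_mul_conjTranspose B).conjTranspose_mul_mul_same P
  have hcS : (c + star c) • S = (2 * RCLike.re c) • S := by
    rw [RCLike.star_def, RCLike.add_conj, ← RCLike.ofReal_ofNat, ← RCLike.ofReal_mul,
      RCLike.real_smul_eq_coe_smul (K := 𝕜)]
  have hsplit : -(P * (A - c • (B * Bᴴ * P)) + (A - c • (B * Bᴴ * P))ᴴ * P + 1)
      = -(P * A + Aᴴ * P - (2 * δ) • (P * B * Bᴴ * P) + 1) + (2 * (RCLike.re c - δ)) • S := by
    rw [mul_sub_smul_add_conjTranspose_mul (isHermitian_mul_conjTranspose_self B) hP, hcS]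
    simp only [S, Matrix.mul_assoc]
    module
  rw [hsplit]
  exact hRic.add (hS.smul (by linarith))

theorem re_lt_zero_of_mem_spectrum_of_lyapunov [DecidableEq n] {M P : Matrix n n 𝕜}
    (hP : P.PosDef) (hQ : (-(P * M + Mᴴ * P)).PosDef) {μ : 𝕜} (hμ : μ ∈ spectrum 𝕜 M) :
    RCLike.re μ < 0 := by
  rw [← spectrum_toLin', ← Module.End.hasEigenvalue_iff_mem_spectrum] at hμ
  obtain ⟨v, hv⟩ := hμ.exists_hasEigenvector
  have hMv : M *ᵥ v = μ • v := hv.apply_eq_smul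
  have hquad : star v ⬝ᵥ (-(P * M + Mᴴ * P) *ᵥ v)
      = -((2 * RCLike.re μ : ℝ) * (star v ⬝ᵥ (P *ᵥ v))) := by
    rw [neg_mulVec, add_mulVec, ← mulVec_mulVec, ← mulVec_mulVec, hMv, mulVec_smul,
      dotProduct_neg, dotProduct_add, dotProduct_mulVec (star v) Mᴴ, ← star_mulVec, hMv,
      star_smul, dotProduct_smul, smul_dotProduct, smul_eq_mul, smul_eq_mul, ← add_mul,
      RCLike.star_def, RCLike.add_conj]
    push_cast; ring
  have hneg := hQ.re_dotProduct_pos hv.2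
  rw [hquad, map_neg, RCLike.re_ofReal_mul] at hneg
  nlinarith [hP.re_dotProduct_pos hv.2]

end Matrix

theorem riccati_gives_hurwitz {n m : ℕ}
    (A : Matrix (Fin n) (Fin n) ℝ) (B : Matrix (Fin n) (Fin m) ℝ)
    (δ : ℝ) (P : Matrix (Fin n) (Fin n) ℝ) (hP : P.PosDef)
    (hRic : (-(P * A + A.transpose * P - (2 * δ) • (P * B * B.transpose * P) + 1)).PosDef)
    (lam : ℂ) (hlam : δ ≤ lam.re) :
    (∀ μ ∈ spectrum ℂ
        (A.map Complex.ofReal - lam • ((B * B.transpose * P).map Complex.ofReal)), μ.re < 0)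
    ∧ (-((P.map Complex.ofReal) *
            (A.map Complex.ofReal - lam • ((B * B.transpose * P).map Complex.ofReal))
          + (A.map Complex.ofReal
              - lam • ((B * B.transpose * P).map Complex.ofReal)).conjTranspose *
            (P.map Complex.ofReal)
          + 1)).PosSemidef := by
  have hPc : (P.map Complex.ofReal).PosDef := hP.map_ofReal
  have hRicC : (-(P.map Complex.ofReal * A.map Complex.ofReal
      + (A.map Complex.ofReal)ᴴ * P.map Complex.ofReal
      - (2 * δ) • (P.map Complex.ofReal * B.map Complex.ofReal * (B.map Complex.ofReal)ᴴ
          * P.map Complex.ofReal) + 1)).PosSemidef := by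
    simpa [map_ofReal_mul, ← map_ofReal_transpose, Matrix.map_add, Matrix.map_sub,
      Matrix.map_neg, Matrix.map_smul, Matrix.map_one] using hRic.map_ofReal.posSemidef
  have hcert := lyapunov_certificate_of_riccati hPc.isHermitian hRicC hlam
  rw [← map_ofReal_transpose, ← map_ofReal_mul, ← map_ofReal_mul] at hcert
  refine ⟨fun μ hμ => re_lt_zero_of_mem_spectrum_of_lyapunov hPc ?_ hμ, hcert⟩
  simpa using PosDef.posSemidef_add hcert PosDef.one
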